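/- Let d ≥ 4 and f ∈ Rat_d^s ∩ I(d). Then f has at least 3 distinct holes. -/

import Mathlib

open MvPolynomial Filter Topology
open scoped Classical

noncomputable section

/-- Binary forms: polynomials in `X 0, X 1` over `ℂ`. A pair of homogeneous elements of
degree `d`, not both zero, represents a point of `ℙ^{2d+1}`. -/
abbrev MP : Type := MvPolynomial (Fin 2) ℂ

noncomputable instance : NormalizationMonoid MP :=
  (UniqueFactorizationMonoid.strongNormalizationMonoid : StrongNormalizationMonoid MP).toNormalizationMonoid

noncomputable instance : NormalizedGCDMonoid MP :=
  UniqueFactorizationMonoid.toNormalizedGCDMonoid MP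

/-- The complex projective line `ℙ¹(ℂ)`. -/
abbrev P1 : Type := Projectivization ℂ (Fin 2 → ℂ)

/-- A linear form vanishing exactly at the projective point `z`. -/
noncomputable def linForm (z : P1) : MP :=
  C (z.rep 1) * X 0 - C (z.rep 0) * X 1

/-- Multiplicity of `z` as a zero of the binary form `H`. -/
noncomputable def rootMult (H : MP) (z : P1) : ℕ :=
  sSup {k : ℕ | linForm z ^ k ∣ H}

/-- `H_f = gcd(P, Q)` for `f = [P : Q]`. -/
noncomputable def Hgcd (f : MP × MP) : MP := gcd f.1 f.2

/-- The depth `d_z(f)` of `z` as a hole of `f`: multiplicity of `z` as a zero of `H_f`. -/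
noncomputable def depthP (f : MP × MP) (z : P1) : ℕ := rootMult (Hgcd f) z

/-- `z` is a hole of `f`, i.e. a zero of `H_f`. -/
def IsHole (f : MP × MP) (z : P1) : Prop := linForm z ∣ Hgcd f

/-- The induced map `f̂ = [P / H_f : Q / H_f]` as a pair of binary forms. -/
noncomputable def fhat (f : MP × MP) : MP × MP :=
  ((dvd_def.mp (gcd_dvd_left f.1 f.2)).choose,
   (dvd_def.mp (gcd_dvd_right f.1 f.2)).choose)

/-- A pair of binary forms acting as a self-map of `ℙ¹` (junk value `z` where undefined). -/
noncomputable def apply₁ (g : MP × MP) (z : P1) : P1 :=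
  if h : (![eval z.rep g.1, eval z.rep g.2] : Fin 2 → ℂ) ≠ 0 then
    Projectivization.mk ℂ _ h
  else z

/-- The induced map `f̂` as a self-map of `ℙ¹`. -/
noncomputable def fhatFun (f : MP × MP) : P1 → P1 := apply₁ (fhat f)

/-- The induced map of `f` is constant. -/
def ConstHat (f : MP × MP) : Prop := ∃ c : P1, ∀ z : P1, fhatFun f z = c

/-- Local multiplicity `m_z(g)` of the rational map `[g.1 : g.2]` at `z`
(equal to `0` when the map is constant). -/
noncomputable def multAt (g : MP × MP) (z : P1) : ℕ :=
  rootMult (C (eval z.rep g.2) * g.1 - C (eval z.rep g.1) * g.2) z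

/-- Local multiplicity `m_z(f̂)` of the induced map of `f` at `z`. -/
noncomputable def hatMult (f : MP × MP) (z : P1) : ℕ := multAt (fhat f) z

/-- Composition of pairs of binary forms (homogeneous representatives). -/
noncomputable def comp2 (f g : MP × MP) : MP × MP :=
  (aeval ![g.1, g.2] f.1, aeval ![g.1, g.2] f.2)

/-- The iterate `f^n` as a pair of binary forms (canonical homogeneous representative). -/
noncomputable def iterPair (f : MP × MP) : ℕ → MP × MP
  | 0 => (X 0, X 1)
  | n + 1 => comp2 f (iterPair f n)

/-- GIT semistability of a degree-`d` point `f` of `ℙ^{2d+1}`. -/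
def Semistable (d : ℕ) (f : MP × MP) : Prop :=
  (∀ z : P1, (depthP f z : ℚ) ≤ ((d : ℚ) + 1) / 2) ∧
  ∀ h : P1, (d : ℚ) / 2 ≤ (depthP f h : ℚ) → fhatFun f h ≠ h

/-- GIT stability of a degree-`d` point `f` of `ℙ^{2d+1}`. -/
def Stable (d : ℕ) (f : MP × MP) : Prop :=
  (∀ z : P1, (depthP f z : ℚ) ≤ (d : ℚ) / 2) ∧
  ∀ h : P1, ((d : ℚ) - 1) / 2 ≤ (depthP f h : ℚ) → fhatFun f h ≠ h

/-- The indeterminacy locus `I(d)`: the induced map is a constant `c` which is a hole. -/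
def Idet (f : MP × MP) : Prop :=
  ∃ c : P1, (∀ z : P1, fhatFun f z = c) ∧ IsHole f c

/-- The set `U_n` of `n`-unstable maps. -/
def Unstable (d n : ℕ) (f : MP × MP) : Prop :=
  Semistable d f ∧ ¬ Idet f ∧ ¬ Semistable (d ^ n) (iterPair f n)

/-- `f` is a representative of a point of `ℙ^{2d+1}`: a pair of homogeneous binary
forms of degree `d`, not both zero. -/
def IsRatRep (d : ℕ) (f : MP × MP) : Prop :=
  f.1.IsHomogeneous d ∧ f.2.IsHomogeneous d ∧ f ≠ 0

/-- Projective equality of pairs of binary forms. -/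
def ProjEq (f g : MP × MP) : Prop := ∃ c : ℂ, c ≠ 0 ∧ g = (C c * f.1, C c * f.2)

/-- The point `∞ = [1 : 0]` of `ℙ¹`. -/
noncomputable def infty : P1 :=
  Projectivization.mk ℂ ![1, 0] (by
    intro h
    simpa using congrFun h 0)

/-- The point `[a : 1]` of `ℙ¹`. -/
noncomputable def ptc (a : ℂ) : P1 :=
  Projectivization.mk ℂ ![a, 1] (by
    intro h
    simpa using congrFun h 1)

/-- The degree of a pair of binary forms. -/
def pairDeg (g : MP × MP) : ℕ := max g.1.totalDegree g.2.totalDegree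

end

/-! Since `f̂` is the constant `c`, the forms `P` and `Q` are proportional, so `H_f` has full
degree `d`. Over `ℂ` a binary form of degree `d` is a product of `d` linear forms, so the depths
of the holes add up to at least `d`. The hole `c` is fixed by `f̂`, hence stability forces
`d_c(f) < (d - 1)/2`, while every other depth is at most `d/2`: two holes cannot carry total
depth `d`. -/

namespace MvPolynomial.IsHomogeneous

lemma eval_smul {R σ : Type*} [CommSemiring R] {φ : MvPolynomial σ R} {n : ℕ}
    (hφ : φ.IsHomogeneous n) (t : R) (x : σ → R) :
    eval (t • x) φ = t ^ n * eval x φ := by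
  conv_lhs => rw [φ.as_sum]
  conv_rhs => rw [φ.as_sum]
  simp only [map_sum, Finset.mul_sum, eval_monomial]
  refine Finset.sum_congr rfl fun m hm => ?_
  simp only [Pi.smul_apply, smul_eq_mul, mul_pow, Finsupp.prod, Finset.prod_mul_distrib,
    Finset.prod_pow_eq_pow_sum, ← hφ.degree_eq_sum_deg_support hm]
  ring

lemma eq_zero_of_forall_eval_rep_eq_zero {K ι : Type*} [Field K] [Infinite K] [Nonempty ι]
    {φ : MvPolynomial ι K} {n : ℕ} (hφ : φ.IsHomogeneous n)
    (h : ∀ z : Projectivization K (ι → K), eval z.rep φ = 0) : φ = 0 := by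
  have hne : ∀ x : ι → K, x ≠ 0 → eval x φ = 0 := fun x hx => by
    obtain ⟨a, ha⟩ := Projectivization.exists_smul_eq_mk_rep K x hx
    have := h (Projectivization.mk K x hx)
    rw [← ha, Units.smul_def, hφ.eval_smul] at this
    exact (mul_eq_zero.mp this).resolve_left (pow_ne_zero _ a.ne_zero)
  refine hφ.eq_zero_of_forall_eval_eq_zero fun x => ?_
  rcases eq_or_ne x 0 with rfl | hx
  · have h1 : (1 : ι → K) ≠ 0 := one_ne_zero
    rw [← zero_smul K (1 : ι → K), hφ.eval_smul, hne 1 h1, mul_zero]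
  · exact hne x hx

lemma of_associated {K σ : Type*} [Field K] {φ ψ : MvPolynomial σ K} {n : ℕ}
    (hφψ : Associated φ ψ) (hψ : ψ.IsHomogeneous n) : φ.IsHomogeneous n := by
  obtain ⟨u, hu⟩ := hφψ.symm
  obtain ⟨r, -, hr⟩ := isUnit_iff_eq_C_of_isReduced.mp u.isUnit
  rw [← hu, hr, mul_comm]
  exact hψ.C_mul r

lemma natDegree_aeval_X_one_le {R : Type*} [CommSemiring R] {φ : MvPolynomial (Fin 2) R}
    {n : ℕ} (hφ : φ.IsHomogeneous n) :
    (MvPolynomial.aeval ![(Polynomial.X : Polynomial R), 1] φ).natDegree ≤ n := by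
  rw [φ.as_sum, map_sum]
  refine Polynomial.natDegree_sum_le_of_forall_le _ _ fun m hm => ?_
  have hdeg : m 0 + m 1 = n := by
    simpa [Finsupp.weight_apply, Finsupp.sum_fintype] using hφ (mem_support_iff.mp hm)
  rw [aeval_monomial, Finsupp.prod_fintype _ _ (by simp), Fin.prod_univ_two]
  simp only [Matrix.cons_val_zero, Matrix.cons_val_one, one_pow, mul_one]
  exact (Polynomial.natDegree_C_mul_X_pow_le _ _).trans (by omega)

end MvPolynomial.IsHomogeneous

lemma Polynomial.homogenize_multiset_prod_X_sub_C {R : Type*} [CommRing R] [Nontrivial R]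
    (s : Multiset R) :
    (s.map fun r => X - C r).prod.homogenize (Multiset.card s) =
      (s.map fun r => MvPolynomial.X 0 - MvPolynomial.C r * MvPolynomial.X 1).prod := by
  induction s using Multiset.induction_on with
  | empty => simp
  | cons r s ih =>
    rw [Multiset.map_cons, Multiset.prod_cons, Multiset.card_cons, add_comm,
      homogenize_mul _ _ (natDegree_X_sub_C_le r) (natDegree_multiset_prod_X_sub_C_eq_card s).le,
      ih, Multiset.map_cons, Multiset.prod_cons]
    simp

lemma MvPolynomial.IsHomogeneous.exists_eq_C_mul_X_pow_mul_prod {K : Type*} [Field K]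
    [IsAlgClosed K] {φ : MvPolynomial (Fin 2) K} {n : ℕ} (hφ : φ.IsHomogeneous n) :
    ∃ (a : K) (s : Multiset K), Multiset.card s ≤ n ∧
      φ = C a * X 1 ^ (n - Multiset.card s) * (s.map fun r => X 0 - C r * X 1).prod := by
  set q : Polynomial K := MvPolynomial.aeval ![Polynomial.X, 1] φ
  have hroots : Multiset.card q.roots = q.natDegree := IsAlgClosed.card_roots_eq_natDegree
  have hk : Multiset.card q.roots ≤ n := hroots ▸ hφ.natDegree_aeval_X_one_le
  refine ⟨q.leadingCoeff, q.roots, hk, ?_⟩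
  have hlin : (Polynomial.C q.leadingCoeff *
      (q.roots.map fun r => Polynomial.X - Polynomial.C r).prod).natDegree ≤
        Multiset.card q.roots :=
    (Polynomial.natDegree_C_mul_le _ _).trans
      (Polynomial.natDegree_multiset_prod_X_sub_C_eq_card _).le
  calc φ = q.homogenize n := (Polynomial.homogenize_eq_of_isHomogeneous hφ rfl).symm
    _ = (Polynomial.C q.leadingCoeff * (q.roots.map fun r => Polynomial.X - Polynomial.C r).prod
          * 1).homogenize (Multiset.card q.roots + (n - Multiset.card q.roots)) := by
      rw [mul_one, Polynomial.C_leadingCoeff_mul_prod_multiset_X_sub_C hroots,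
        Nat.add_sub_cancel' hk]
    _ = _ := by
      rw [Polynomial.homogenize_mul _ _ hlin (by simp), Polynomial.homogenize_C_mul,
        Polynomial.homogenize_multiset_prod_X_sub_C, Polynomial.homogenize_one]
      ring

lemma Associated.multiset_prod_map {M ι : Type*} [CommMonoid M] {f g : ι → M}
    (h : ∀ i, Associated (f i) (g i)) (s : Multiset ι) :
    Associated (s.map f).prod (s.map g).prod := by
  induction s using Multiset.induction_on with
  | empty => rfl
  | cons i s ih => simpa only [Multiset.map_cons, Multiset.prod_cons] using (h i).mul_mul ih

lemma linForm_isHomogeneous (z : P1) : (linForm z).IsHomogeneous 1 :=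
  (isHomogeneous_C_mul_X _ 0).sub (isHomogeneous_C_mul_X _ 1)

lemma linForm_ne_zero (z : P1) : linForm z ≠ 0 := by
  intro h
  apply z.rep_nonzero
  have h0 := congrArg (eval ![1, 0]) h
  have h1 := congrArg (eval ![0, 1]) h
  simp only [linForm, map_sub, map_mul, eval_C, eval_X, map_zero] at h0 h1
  ext i
  fin_cases i <;> simp_all

lemma associated_linForm_mk (v : Fin 2 → ℂ) (hv : v ≠ 0) :
    Associated (C (v 1) * X 0 - C (v 0) * X 1 : MP) (linForm (Projectivization.mk ℂ v hv)) := by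
  obtain ⟨a, ha⟩ := Projectivization.exists_smul_eq_mk_rep ℂ v hv
  have h : linForm (Projectivization.mk ℂ v hv) = C (a : ℂ) * (C (v 1) * X 0 - C (v 0) * X 1) := by
    simp only [linForm, ← ha, Units.smul_def, Pi.smul_apply, smul_eq_mul, C_mul]
    ring
  exact h ▸ associated_unit_mul_right _ _ (a.isUnit.map C)

lemma le_rootMult {H : MP} (hH : H ≠ 0) {z : P1} {k : ℕ} (h : linForm z ^ k ∣ H) :
    k ≤ rootMult H z := by
  refine le_csSup ⟨H.totalDegree, fun j hj => ?_⟩ h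
  have hdeg := ((linForm_isHomogeneous z).pow j).totalDegree (pow_ne_zero j (linForm_ne_zero z))
  simpa [hdeg] using totalDegree_le_of_dvd_of_isDomain hj hH

lemma exists_associated_prod_linForm {H : MP} {n : ℕ} (hH : H.IsHomogeneous n) (hH0 : H ≠ 0) :
    ∃ M : Multiset P1, Multiset.card M = n ∧ Associated H (M.map linForm).prod := by
  obtain ⟨a, s, hs, rfl⟩ := hH.exists_eq_C_mul_X_pow_mul_prod
  have ha : a ≠ 0 := by rintro rfl; simp at hH0
  refine ⟨Multiset.replicate (n - Multiset.card s) infty + s.map ptc, by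
    simp only [Multiset.card_add, Multiset.card_replicate, Multiset.card_map]; omega, ?_⟩
  rw [Multiset.map_add, Multiset.prod_add, Multiset.map_replicate, Multiset.prod_replicate,
    Multiset.map_map, mul_assoc]
  have hinfty : Associated (X 1 : MP) (linForm infty) := by
    simpa [infty] using (associated_linForm_mk ![1, 0] _).neg_left
  have hptc (r : ℂ) : Associated (X 0 - C r * X 1 : MP) (linForm (ptc r)) := by
    simpa [ptc] using associated_linForm_mk ![r, 1] _
  exact (associated_unit_mul_left _ _ ((isUnit_iff_ne_zero.mpr ha).map C)).trans
    ((hinfty.pow_pow).mul_mul (Associated.multiset_prod_map hptc s))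

lemma le_sum_rootMult {H : MP} {n : ℕ} (hH : H.IsHomogeneous n) (hH0 : H ≠ 0) {S : Finset P1}
    (hS : ∀ z, linForm z ∣ H → z ∈ S) : n ≤ ∑ z ∈ S, rootMult H z := by
  obtain ⟨M, rfl, hM⟩ := exists_associated_prod_linForm hH hH0
  have hdvd (z : P1) : linForm z ^ M.count z ∣ H := by
    refine dvd_trans ?_ hM.symm.dvd
    rw [← Multiset.prod_replicate, ← Multiset.map_replicate, ← Multiset.filter_eq']
    exact Multiset.prod_dvd_prod_of_le (Multiset.map_le_map (Multiset.filter_le _ _))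
  calc Multiset.card M = ∑ z ∈ S, M.count z := (Multiset.sum_count_eq_card fun z hz =>
        hS z ((dvd_pow_self _ (Multiset.count_ne_zero.mpr hz)).trans (hdvd z))).symm
    _ ≤ ∑ z ∈ S, rootMult H z := Finset.sum_le_sum fun z _ => le_rootMult hH0 (hdvd z)

lemma Hgcd_mul_fhat_fst (f : MP × MP) : Hgcd f * (fhat f).1 = f.1 :=
  (dvd_def.mp (gcd_dvd_left f.1 f.2)).choose_spec.symm

lemma Hgcd_mul_fhat_snd (f : MP × MP) : Hgcd f * (fhat f).2 = f.2 :=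
  (dvd_def.mp (gcd_dvd_right f.1 f.2)).choose_spec.symm

lemma Hgcd_ne_zero {f : MP × MP} (hf : f ≠ 0) : Hgcd f ≠ 0 := fun h =>
  hf (Prod.ext_iff.mpr ((gcd_eq_zero_iff _ _).mp h))

lemma rep_mul_eval_eq_of_apply₁_eq {g : MP × MP} {z c : P1} (h : apply₁ g z = c) :
    c.rep 1 * eval z.rep g.1 = c.rep 0 * eval z.rep g.2 := by
  unfold apply₁ at h
  split_ifs at h with hv
  · obtain ⟨a, ha⟩ :=
      (Projectivization.mk_eq_mk_iff ℂ _ _ hv c.rep_nonzero).mp (h.trans c.mk_rep.symm)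
    have h0 := congrFun ha 0
    have h1 := congrFun ha 1
    simp only [Units.smul_def, Pi.smul_apply, smul_eq_mul, Matrix.cons_val_zero,
      Matrix.cons_val_one] at h0 h1
    rw [← h0, ← h1]
    ring
  · rw [not_not] at hv
    have h0 := congrFun hv 0
    have h1 := congrFun hv 1
    simp only [Matrix.cons_val_zero, Matrix.cons_val_one, Pi.zero_apply] at h0 h1
    rw [h0, h1, mul_zero, mul_zero]

/-- The form `c₁P - c₀Q = H_f · (c₁P̂ - c₀Q̂)` vanishes on all of `ℙ¹`, so `P` and `Q` are
proportional and `H_f` is one of them up to a unit. -/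
lemma isHomogeneous_Hgcd_of_fhatFun_eq {d : ℕ} {f : MP × MP} (hf : IsRatRep d f) {c : P1}
    (hc : ∀ z, fhatFun f z = c) : (Hgcd f).IsHomogeneous d := by
  obtain ⟨hP, hQ, -⟩ := hf
  have hG : C (c.rep 1) * f.1 - C (c.rep 0) * f.2 = 0 := by
    refine ((hP.C_mul _).sub (hQ.C_mul _)).eq_zero_of_forall_eval_rep_eq_zero fun z => ?_
    have h := rep_mul_eval_eq_of_apply₁_eq (hc z)
    rw [← Hgcd_mul_fhat_fst, ← Hgcd_mul_fhat_snd]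
    simp only [map_sub, map_mul, eval_C]
    linear_combination eval z.rep (Hgcd f) * h
  rcases eq_or_ne (c.rep 0) 0 with h0 | h0
  · have h1 : c.rep 1 ≠ 0 := fun h1 => c.rep_nonzero (by ext i; fin_cases i <;> simp [h0, h1])
    have hP0 : f.1 = 0 := by simpa [h0, h1] using hG
    exact hQ.of_associated (by rw [Hgcd, hP0]; exact gcd_zero_left' f.2)
  · have hinv : C (c.rep 0)⁻¹ * C (c.rep 0) = (1 : MP) := by
      rw [← C_mul, inv_mul_cancel₀ h0, C_1]
    have hdvd : f.1 ∣ f.2 := ⟨C (c.rep 1) * C (c.rep 0)⁻¹, by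
      linear_combination (-C (c.rep 0)⁻¹) * hG - f.2 * hinv⟩
    exact hP.of_associated (associated_gcd_left_iff.mpr hdvd).symm

theorem statement9_general (d : ℕ) (f : MP × MP) (hf : IsRatRep d f)
    (hs : Stable d f) (hI : Idet f) :
    ∃ z₁ z₂ z₃ : P1, z₁ ≠ z₂ ∧ z₁ ≠ z₃ ∧ z₂ ≠ z₃ ∧
      IsHole f z₁ ∧ IsHole f z₂ ∧ IsHole f z₃ := by
  obtain ⟨c, hc, hole_c⟩ := hI
  have hH := isHomogeneous_Hgcd_of_fhatFun_eq hf hc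
  have hc_lt : (depthP f c : ℚ) < ((d : ℚ) - 1) / 2 := lt_of_not_ge fun h => hs.2 c h (hc c)
  by_contra! hfew
  obtain ⟨w, hw⟩ : ∃ w, ∀ z, IsHole f z → z = c ∨ z = w := by
    by_cases h : ∃ w, w ≠ c ∧ IsHole f w
    · obtain ⟨w, hwc, hole_w⟩ := h
      exact ⟨w, fun z hz => by
        by_contra! hzcw
        exact hfew c w z hwc.symm hzcw.1.symm hzcw.2.symm hole_c hole_w hz⟩
    · exact ⟨c, fun z hz => Or.inl (by_contra fun hzc => h ⟨z, hzc, hz⟩)⟩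
  have hsum : d ≤ depthP f c + depthP f w := by
    have := le_sum_rootMult hH (Hgcd_ne_zero hf.2.2) (S := {c, w}) (by simpa [IsHole] using hw)
    rcases eq_or_ne c w with rfl | hcw
    · simp only [Finset.mem_singleton, Finset.insert_eq_of_mem, Finset.sum_singleton] at this
      simp only [depthP]
      omega
    · simpa [Finset.sum_pair hcw, depthP] using this
  have hsum' : (d : ℚ) ≤ depthP f c + depthP f w := by exact_mod_cast hsum
  linarith [hs.1 w]

/-- for `d ≥ 4`, a stable map in `I(d)` has at least `3` distinct holes. -/
theorem statement9 (d : ℕ) (hd : 4 ≤ d) (f : MP × MP) (hf : IsRatRep d f)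
    (hs : Stable d f) (hI : Idet f) :
    ∃ z₁ z₂ z₃ : P1, z₁ ≠ z₂ ∧ z₁ ≠ z₃ ∧ z₂ ≠ z₃ ∧
      IsHole f z₁ ∧ IsHole f z₂ ∧ IsHole f z₃ :=
  statement9_general d f hf hs hI
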